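/- Trace property of 𝔼_X^Λ: for finite X ⊆ Λ ⊆ Γ and any A ∈ 𝔄_{Λ∖X}, the element 𝔼_X^Λ(A) is a scalar multiple of the identity. Explicitly, for a monomial A = ∏_{x ∈ Λ∖X} A_x supported in Λ∖X one has 𝔼_X^Λ(A) = (∏_{x ∈ Λ∖X} c(A_x))·1, where c(1) = 1, c(a_x* a_x) = 1/2, and c(a_x) = c(a_x*) = 0. -/

import Mathlib

open scoped Classical

/-- The canonical anticommutation relations for a family `a x` of annihilation
operators in a C*-algebra. -/
def IsCAR {Γ A : Type*} [Ring A] [StarRing A] (a : Γ → A) : Prop :=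
  (∀ x y, a x * a y + a y * a x = 0) ∧
  (∀ x y, star (a x) * star (a y) + star (a y) * star (a x) = 0) ∧
  (∀ x y, a x * star (a y) + star (a y) * a x = if x = y then (1 : A) else 0)

/-- The four possible factors of a monomial at a site `x`:
`1`, `a x`, `a x *`, and `a x * a x`. -/
def carFactor {Γ A : Type*} [Ring A] [StarRing A] (a : Γ → A) (k : Fin 4) (x : Γ) : A :=
  match k with
  | 0 => 1
  | 1 => a x
  | 2 => star (a x)
  | 3 => star (a x) * a x

/-- The monomial with factor pattern `k` along the enumeration `l` of a finite set of sites. -/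
def carMonomial {Γ A : Type*} [Ring A] [StarRing A] (a : Γ → A) (l : List Γ)
    (k : Γ → Fin 4) : A :=
  (l.map fun x => carFactor a (k x) x).prod

/-- The number of odd factors (`a x` or `a x *`) of the monomial with pattern `k` along `l`. -/
def carOddCount {Γ : Type*} (l : List Γ) (k : Γ → Fin 4) : ℕ :=
  l.countP fun x => decide (k x = 1 ∨ k x = 2)

/-- `𝔄_X`: the linear span of the monomials supported in the finite set `X`. -/
def carSpan {Γ A : Type*} [Ring A] [StarRing A] [Algebra ℂ A] (a : Γ → A) (X : Finset Γ) :
    Submodule ℂ A :=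
  Submodule.span ℂ {m | ∃ (l : List Γ) (k : Γ → Fin 4),
    l.Nodup ∧ l.toFinset = X ∧ m = carMonomial a l k}

/-- `𝔄_X⁺`: the linear span of the even monomials supported in the finite set `X`. -/
def carSpanEven {Γ A : Type*} [Ring A] [StarRing A] [Algebra ℂ A] (a : Γ → A) (X : Finset Γ) :
    Submodule ℂ A :=
  Submodule.span ℂ {m | ∃ (l : List Γ) (k : Γ → Fin 4),
    l.Nodup ∧ l.toFinset = X ∧ Even (carOddCount l k) ∧ m = carMonomial a l k}

/-- The single-site unitaries `u_x^(0) = 1`, `u_x^(1) = a_x* + a_x`, `u_x^(2) = a_x* − a_x`,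
`u_x^(3) = 1 − 2 a_x* a_x`. -/
def uFactor {Γ A : Type*} [Ring A] [StarRing A] (a : Γ → A) (k : Fin 4) (x : Γ) : A :=
  match k with
  | 0 => 1
  | 1 => star (a x) + a x
  | 2 => star (a x) - a x
  | 3 => 1 - 2 * (star (a x) * a x)

/-- The unitary `u(α) = u_{x_1}^{(α(x_1))} ⋯ u_{x_n}^{(α(x_n))}` along the enumeration `l`
of `Λ ∖ X`. -/
def uProd {Γ A : Type*} [Ring A] [StarRing A] (a : Γ → A) (l : List Γ)
    (α : Fin l.length → Fin 4) : A :=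
  (List.ofFn fun i => uFactor a (α i) (l.get i)).prod

/-- The conditional expectation `𝔼_X^Λ(B) = 4^{−|Λ∖X|} ∑_{α} u(α)* B u(α)`, where `l` is
an enumeration of `Λ ∖ X`. -/
noncomputable def condExp {Γ A : Type*} [Ring A] [StarRing A] [Algebra ℂ A] (a : Γ → A)
    (l : List Γ) (B : A) : A :=
  ((4 : ℂ) ^ l.length)⁻¹ • ∑ α : Fin l.length → Fin 4, star (uProd a l α) * B * uProd a l α


/-!
`condExp a l` is the composite, along `l`, of the single-site averages
`siteExp a x B = ¼ ∑ₖ u_x^(k)* B u_x^(k)`. Unitaries at distinct sites commute up to a sign, so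
these averages commute and `𝔼_X^Λ` does not depend on the enumeration of `Λ ∖ X`: the sites may
be averaged in the order of the monomial. A monomial with an odd factor at `y` anticommutes with
the local parity `u_y^(3)`, and `siteExp a y` kills such elements because
`u_y^(2) = u_y^(1) u_y^(3)`. In a monomial with only even factors, the factors after the first
site `x` commute with `a x` and `a x*`, so `siteExp a x` acts on the site-`x` factor alone,
giving `c(1) = 1` and `c(a_x* a_x) = 1/2`.
-/

section CARAlgebra

variable {Γ A : Type*}

section Ring

variable [Ring A] [StarRing A] {a : Γ → A}

def GradedCommute (a : Γ → A) (x : Γ) (σ : ℤˣ) (u : A) : Prop :=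
  a x * u = σ • (u * a x) ∧ star (a x) * u = σ • (u * star (a x))

namespace GradedCommute

variable {x : Γ} {σ τ : ℤˣ} {u v : A}

theorem one : GradedCommute a x 1 (1 : A) := by
  simp [GradedCommute]

theorem mul (hu : GradedCommute a x σ u) (hv : GradedCommute a x τ v) :
    GradedCommute a x (σ * τ) (u * v) := by
  constructor
  · rw [← mul_assoc, hu.1, smul_mul_assoc, mul_assoc, hv.1, mul_smul_comm, smul_smul, mul_assoc]
  · rw [← mul_assoc, hu.2, smul_mul_assoc, mul_assoc, hv.2, mul_smul_comm, smul_smul, mul_assoc]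

theorem add (hu : GradedCommute a x σ u) (hv : GradedCommute a x σ v) :
    GradedCommute a x σ (u + v) :=
  ⟨by rw [mul_add, hu.1, hv.1, add_mul, smul_add],
    by rw [mul_add, hu.2, hv.2, add_mul, smul_add]⟩

theorem sub (hu : GradedCommute a x σ u) (hv : GradedCommute a x σ v) :
    GradedCommute a x σ (u - v) :=
  ⟨by rw [mul_sub, hu.1, hv.1, sub_mul, smul_sub],
    by rw [mul_sub, hu.2, hv.2, sub_mul, smul_sub]⟩

theorem commute_star_mul_self (hu : GradedCommute a x σ u) : Commute (star (a x) * a x) u := by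
  rw [Commute, SemiconjBy, mul_assoc, hu.1, mul_smul_comm, ← mul_assoc, hu.2, smul_mul_assoc,
    smul_smul, Int.units_mul_self, one_smul, mul_assoc]

theorem commute_uFactor_three (hu : GradedCommute a x σ u) : Commute (uFactor a 3 x) u :=
  (Commute.one_left u).sub_left ((Commute.ofNat_left 2 u).mul_left hu.commute_star_mul_self)

theorem uFactor_mul (hu : GradedCommute a x σ u) (j : Fin 4) :
    uFactor a j x * u = (if j = 1 ∨ j = 2 then σ else 1) • (u * uFactor a j x) := by
  fin_cases j
  · simp [uFactor]
  · simp [uFactor, add_mul, mul_add, hu.1, hu.2]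
  · simp [uFactor, sub_mul, mul_sub, hu.1, hu.2, smul_sub]
  · simpa using hu.commute_uFactor_three.eq

end GradedCommute

def fermionSign (k : Fin 4) : ℤˣ := if k = 1 ∨ k = 2 then -1 else 1

theorem carMonomial_cons (k : Γ → Fin 4) (y : Γ) (l : List Γ) :
    carMonomial a (y :: l) k = carFactor a (k y) y * carMonomial a l k :=
  List.prod_cons

theorem carMonomial_append_cons (k : Γ → Fin 4) (l₁ : List Γ) (y : Γ) (l₂ : List Γ) :
    carMonomial a (l₁ ++ y :: l₂) k =
      carMonomial a l₁ k * carFactor a (k y) y * carMonomial a l₂ k := by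
  simp [carMonomial, mul_assoc]

theorem uProd_cons (x : Γ) (t : List Γ) (j : Fin 4) (β : Fin t.length → Fin 4) :
    uProd a (x :: t) (Fin.cons j β) = uFactor a j x * uProd a t β := by
  simp [uProd, List.ofFn_succ]

theorem star_uFactor_one (x : Γ) : star (uFactor a 1 x) = uFactor a 1 x := by
  simp [uFactor, add_comm]

theorem star_uFactor_three (x : Γ) : star (uFactor a 3 x) = uFactor a 3 x := by
  simp [uFactor, two_mul]

theorem IsCAR.mul_star_self (h : IsCAR a) (x : Γ) : a x * star (a x) = 1 - star (a x) * a x := by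
  simpa [eq_sub_iff_add_eq] using h.2.2 x x

theorem IsCAR.mul_star_mul (h : IsCAR a) (x : Γ) (w : A) :
    a x * (star (a x) * w) = w - star (a x) * (a x * w) := by
  rw [← mul_assoc, h.mul_star_self, sub_mul, one_mul, mul_assoc]

section DistinctSites

variable {x y : Γ}

theorem gradedCommute_a (h : IsCAR a) (hxy : x ≠ y) : GradedCommute a x (-1) (a y) := by
  have hyx := h.2.2 y x
  rw [if_neg hxy.symm] at hyx
  simpa [GradedCommute, eq_neg_iff_add_eq_zero, add_comm] using ⟨h.1 x y, hyx⟩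

theorem gradedCommute_star_a (h : IsCAR a) (hxy : x ≠ y) :
    GradedCommute a x (-1) (star (a y)) := by
  have hxy' := h.2.2 x y
  rw [if_neg hxy] at hxy'
  simpa [GradedCommute, eq_neg_iff_add_eq_zero] using ⟨hxy', h.2.1 x y⟩

theorem gradedCommute_carFactor (h : IsCAR a) (hxy : x ≠ y) (p : Fin 4) :
    GradedCommute a x (fermionSign p) (carFactor a p y) := by
  fin_cases p
  · exact GradedCommute.one
  · exact gradedCommute_a h hxy
  · exact gradedCommute_star_a h hxy
  · simpa [fermionSign, carFactor] using (gradedCommute_star_a h hxy).mul (gradedCommute_a h hxy)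

theorem gradedCommute_uFactor (h : IsCAR a) (hxy : x ≠ y) (p : Fin 4) :
    GradedCommute a x (fermionSign p) (uFactor a p y) := by
  have hn : GradedCommute a x 1 (star (a y) * a y) := by
    simpa using (gradedCommute_star_a h hxy).mul (gradedCommute_a h hxy)
  fin_cases p
  · exact GradedCommute.one
  · exact (gradedCommute_star_a h hxy).add (gradedCommute_a h hxy)
  · exact (gradedCommute_star_a h hxy).sub (gradedCommute_a h hxy)
  · simpa [fermionSign, uFactor, two_mul] using GradedCommute.one.sub (hn.add hn)

theorem gradedCommute_carMonomial (h : IsCAR a) (k : Γ → Fin 4) {l : List Γ} (hx : x ∉ l) :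
    GradedCommute a x (l.map fun y => fermionSign (k y)).prod (carMonomial a l k) := by
  induction l with
  | nil => exact GradedCommute.one
  | cons y t ih =>
    rw [List.mem_cons, not_or] at hx
    rw [carMonomial_cons, List.map_cons, List.prod_cons]
    exact (gradedCommute_carFactor h hx.1 (k y)).mul (ih hx.2)

theorem uFactor_mul_uFactor_of_ne (h : IsCAR a) (hxy : x ≠ y) (j k : Fin 4) :
    ∃ τ : ℤˣ, uFactor a j x * uFactor a k y = τ • (uFactor a k y * uFactor a j x) :=
  ⟨_, (gradedCommute_uFactor h hxy k).uFactor_mul j⟩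

end DistinctSites

end Ring

section Algebra

variable [Ring A] [StarRing A] [Algebra ℂ A] {a : Γ → A}

theorem IsCAR.mul_self_eq_zero (h : IsCAR a) (x : Γ) : a x * a x = 0 := by
  simpa [← two_smul ℂ] using h.1 x x

theorem IsCAR.star_mul_self_eq_zero (h : IsCAR a) (x : Γ) : star (a x) * star (a x) = 0 := by
  simpa [← two_smul ℂ] using h.2.1 x x

theorem IsCAR.star_mul_self_mul_eq_zero (h : IsCAR a) (x : Γ) (w : A) :
    star (a x) * (star (a x) * w) = 0 := by
  rw [← mul_assoc, h.star_mul_self_eq_zero, zero_mul]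

theorem uFactor_one_mul_self (h : IsCAR a) (x : Γ) : uFactor a 1 x * uFactor a 1 x = 1 := by
  simp only [uFactor, mul_add, add_mul, h.mul_self_eq_zero, h.star_mul_self_eq_zero,
    h.mul_star_self]
  noncomm_ring

theorem uFactor_three_mul_self (h : IsCAR a) (x : Γ) : uFactor a 3 x * uFactor a 3 x = 1 := by
  simp only [uFactor, two_mul, mul_add, add_mul, mul_sub, sub_mul, mul_assoc, one_mul, mul_one,
    h.mul_star_mul, h.mul_self_eq_zero]
  noncomm_ring

theorem uFactor_one_mul_three (h : IsCAR a) (x : Γ) :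
    uFactor a 1 x * uFactor a 3 x = uFactor a 2 x := by
  simp only [uFactor, two_mul, mul_add, add_mul, mul_sub, mul_one, mul_zero,
    h.star_mul_self_mul_eq_zero, h.mul_star_mul, h.mul_self_eq_zero]
  noncomm_ring

theorem gradedCommute_uFactor_three_self (h : IsCAR a) (x : Γ) :
    GradedCommute a x (-1) (uFactor a 3 x) := by
  constructor <;>
  · simp only [uFactor, Units.neg_smul, one_smul, two_mul, mul_add, add_mul, mul_sub, sub_mul,
      mul_assoc, one_mul, mul_one, mul_zero, h.star_mul_self_mul_eq_zero, h.mul_star_mul,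
      h.mul_star_self, h.mul_self_eq_zero]
    noncomm_ring

theorem uFactor_three_mul_carFactor_of_odd (h : IsCAR a) (x : Γ) {p : Fin 4}
    (hp : p = 1 ∨ p = 2) :
    uFactor a 3 x * carFactor a p x = -(carFactor a p x * uFactor a 3 x) := by
  have hu₃ := gradedCommute_uFactor_three_self h x
  rcases hp with rfl | rfl
  · rw [carFactor, hu₃.1, Units.neg_smul, one_smul, neg_neg]
  · rw [carFactor, hu₃.2, Units.neg_smul, one_smul, neg_neg]

theorem uFactor_one_mul_star_mul_self_mul (h : IsCAR a) (x : Γ) :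
    uFactor a 1 x * (star (a x) * a x) * uFactor a 1 x = 1 - star (a x) * a x := by
  simp only [uFactor, mul_add, add_mul, sub_mul, mul_zero, h.star_mul_self_mul_eq_zero,
    h.mul_star_mul, h.mul_star_self, h.mul_self_eq_zero]
  noncomm_ring

noncomputable def siteExp (a : Γ → A) (x : Γ) (B : A) : A :=
  (4 : ℂ)⁻¹ • ∑ k : Fin 4, star (uFactor a k x) * B * uFactor a k x

noncomputable def carCoeff (p : Fin 4) : ℂ := if p = 0 then 1 else if p = 3 then 1 / 2 else 0

theorem siteExp_eq (h : IsCAR a) (x : Γ) (B : A) :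
    siteExp a x B = (4 : ℂ)⁻¹ • (B + uFactor a 1 x * B * uFactor a 1 x +
      uFactor a 3 x * (uFactor a 1 x * B * uFactor a 1 x) * uFactor a 3 x +
      uFactor a 3 x * B * uFactor a 3 x) := by
  rw [siteExp, Fin.sum_univ_four, ← uFactor_one_mul_three h]
  simp only [star_mul, star_uFactor_one, star_uFactor_three]
  simp only [uFactor, star_one, one_mul, mul_one, mul_assoc]

theorem siteExp_eq_zero_of_anticommute (h : IsCAR a) {x : Γ} {B : A}
    (hB : uFactor a 3 x * B = -(B * uFactor a 3 x)) : siteExp a x B = 0 := by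
  set u₁ := uFactor a 1 x
  set u₃ := uFactor a 3 x
  have conj : ∀ C, u₃ * C = -(C * u₃) → u₃ * C * u₃ = -C := fun C hC => by
    rw [hC, neg_mul, mul_assoc, uFactor_three_mul_self h, mul_one]
  have h31 : u₃ * u₁ = -(u₁ * u₃) := by
    have := (gradedCommute_uFactor_three_self h x).uFactor_mul 1
    simp only [if_true, true_or, Units.neg_smul, one_smul] at this
    rw [this, neg_neg]
  have hC : u₃ * (u₁ * B * u₁) = -(u₁ * B * u₁ * u₃) := calc
    u₃ * (u₁ * B * u₁) = (u₃ * u₁) * B * u₁ := by noncomm_ring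
    _ = -(u₁ * (u₃ * B) * u₁) := by rw [h31]; noncomm_ring
    _ = u₁ * B * (u₃ * u₁) := by rw [hB]; noncomm_ring
    _ = -(u₁ * B * u₁ * u₃) := by rw [h31]; noncomm_ring
  rw [siteExp_eq h, conj _ hB, conj _ hC]
  module

theorem siteExp_carFactor (h : IsCAR a) (x : Γ) (p : Fin 4) :
    siteExp a x (carFactor a p x) = carCoeff p • 1 := by
  have hu₃ := gradedCommute_uFactor_three_self h x
  have hu₃n : uFactor a 3 x * (star (a x) * a x) * uFactor a 3 x = star (a x) * a x := by
    rw [← hu₃.commute_star_mul_self.eq, mul_assoc, uFactor_three_mul_self h, mul_one]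
  fin_cases p <;> simp only [Fin.zero_eta, Fin.mk_one, Fin.reduceFinMk]
  · rw [siteExp_eq h]
    simp only [carFactor, carCoeff, ↓reduceIte, mul_one, uFactor_one_mul_self h,
      uFactor_three_mul_self h]
    module
  · exact (siteExp_eq_zero_of_anticommute h (uFactor_three_mul_carFactor_of_odd h x
      (Or.inl rfl))).trans (by simp [carCoeff])
  · exact (siteExp_eq_zero_of_anticommute h (uFactor_three_mul_carFactor_of_odd h x
      (Or.inr rfl))).trans (by simp [carCoeff])
  · rw [siteExp_eq h]
    simp only [carFactor, carCoeff, Fin.reduceEq, ↓reduceIte, uFactor_one_mul_star_mul_self_mul h,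
      mul_sub, sub_mul, mul_one, uFactor_three_mul_self h, hu₃n]
    module

theorem siteExp_mul_of_gradedCommute {x : Γ} {u : A} (hu : GradedCommute a x 1 u) (B : A) :
    siteExp a x (B * u) = siteExp a x B * u := by
  simp only [siteExp, smul_mul_assoc, Finset.sum_mul]
  congr 1
  refine Finset.sum_congr rfl fun k _ => ?_
  have hk : uFactor a k x * u = u * uFactor a k x := by simpa using hu.uFactor_mul k
  simp only [mul_assoc, hk]

theorem siteExp_siteExp (x y : Γ) (B : A) :
    siteExp a x (siteExp a y B) = ((4 : ℂ)⁻¹ * 4⁻¹) • ∑ j : Fin 4, ∑ k : Fin 4,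
      star (uFactor a k y * uFactor a j x) * B * (uFactor a k y * uFactor a j x) := by
  simp only [siteExp, mul_smul_comm, smul_mul_assoc, Finset.mul_sum, Finset.sum_mul,
    ← Finset.smul_sum, smul_smul, star_mul, mul_assoc]

theorem siteExp_comm (h : IsCAR a) (x y : Γ) (B : A) :
    siteExp a x (siteExp a y B) = siteExp a y (siteExp a x B) := by
  rcases eq_or_ne x y with rfl | hxy
  · rfl
  rw [siteExp_siteExp, siteExp_siteExp, Finset.sum_comm]
  refine congrArg _ (Finset.sum_congr rfl fun k _ => Finset.sum_congr rfl fun j _ => ?_)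
  obtain ⟨τ, hτ⟩ := uFactor_mul_uFactor_of_ne h hxy.symm k j
  rw [hτ]
  rcases Int.units_eq_one_or τ with rfl | rfl <;> simp

noncomputable def condExpLinearMap (a : Γ → A) (l : List Γ) : A →ₗ[ℂ] A where
  toFun := condExp a l
  map_add' B C := by simp only [condExp, mul_add, add_mul, Finset.sum_add_distrib, smul_add]
  map_smul' c B := by
    simp only [condExp, RingHom.id_apply, mul_smul_comm, smul_mul_assoc, ← Finset.smul_sum]
    exact smul_comm _ _ _

theorem condExp_smul (l : List Γ) (c : ℂ) (B : A) :
    condExp a l (c • B) = c • condExp a l B :=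
  (condExpLinearMap a l).map_smul c B

theorem condExp_zero (l : List Γ) : condExp a l 0 = 0 :=
  (condExpLinearMap a l).map_zero

theorem condExp_nil (B : A) : condExp a [] B = B := by
  simp [condExp, uProd]

theorem condExp_cons (x : Γ) (t : List Γ) (B : A) :
    condExp a (x :: t) B = condExp a t (siteExp a x B) := by
  have hsum := (Fin.consEquiv fun _ : Fin (t.length + 1) => Fin 4).sum_comp
    (fun α => star (uProd a (x :: t) α) * B * uProd a (x :: t) α)
  simp only [condExp, siteExp, List.length_cons, ← hsum, Fintype.sum_prod_type,
    Fin.consEquiv, Equiv.coe_fn_mk, uProd_cons, star_mul, smul_mul_assoc, mul_smul_comm,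
    Finset.mul_sum, Finset.sum_mul, ← Finset.smul_sum, smul_smul, pow_succ, mul_inv]
  rw [Finset.sum_comm]
  simp only [mul_assoc]

theorem condExp_perm (h : IsCAR a) {l₁ l₂ : List Γ} (hl : l₁.Perm l₂) :
    condExp a l₁ = condExp a l₂ := by
  induction hl with
  | nil => rfl
  | cons x _ ih => funext B; rw [condExp_cons, condExp_cons, ih]
  | swap x y l => funext B; simp only [condExp_cons, siteExp_comm h]
  | trans _ _ ih₁ ih₂ => exact ih₁.trans ih₂

theorem condExp_carMonomial_eq_zero_of_odd (h : IsCAR a) (k : Γ → Fin 4) {l : List Γ}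
    (hl : l.Nodup) {y : Γ} (hy : y ∈ l) (hky : k y = 1 ∨ k y = 2) :
    condExp a l (carMonomial a l k) = 0 := by
  obtain ⟨l₁, l₂, rfl⟩ := List.append_of_mem hy
  have hy' : y ∉ l₁ ++ l₂ := (List.nodup_cons.mp (List.nodup_middle.mp hl)).1
  have hL := gradedCommute_carMonomial h k fun hy₁ => hy' (List.mem_append_left l₂ hy₁)
  have hR := gradedCommute_carMonomial h k fun hy₂ => hy' (List.mem_append_right l₁ hy₂)
  have hF := uFactor_three_mul_carFactor_of_odd h y hky
  rw [condExp_perm h List.perm_middle, condExp_cons, carMonomial_append_cons,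
    siteExp_eq_zero_of_anticommute h, condExp_zero]
  calc uFactor a 3 y * (carMonomial a l₁ k * carFactor a (k y) y * carMonomial a l₂ k)
      = uFactor a 3 y * carMonomial a l₁ k * carFactor a (k y) y * carMonomial a l₂ k := by
        simp only [mul_assoc]
    _ = -(carMonomial a l₁ k * carFactor a (k y) y * (uFactor a 3 y * carMonomial a l₂ k)) := by
        rw [hL.commute_uFactor_three.eq, mul_assoc (carMonomial a l₁ k), hF]
        noncomm_ring
    _ = -(carMonomial a l₁ k * carFactor a (k y) y * carMonomial a l₂ k * uFactor a 3 y) := by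
        rw [hR.commute_uFactor_three.eq]
        simp only [mul_assoc]

theorem condExp_carMonomial (h : IsCAR a) (k : Γ → Fin 4) {l : List Γ} (hl : l.Nodup) :
    condExp a l (carMonomial a l k) = (l.map fun y => carCoeff (k y)).prod • 1 := by
  induction l with
  | nil => simp [condExp_nil, carMonomial]
  | cons x t ih =>
    by_cases hodd : ∃ y ∈ x :: t, k y = 1 ∨ k y = 2
    · obtain ⟨y, hy, hky⟩ := hodd
      have hc : carCoeff (k y) = 0 := by rcases hky with hk | hk <;> simp [carCoeff, hk]
      rw [condExp_carMonomial_eq_zero_of_odd h k hl hy hky,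
        List.prod_eq_zero (hc ▸ List.mem_map_of_mem hy), zero_smul]
    · push Not at hodd
      rw [List.nodup_cons] at hl
      have hsign : (t.map fun y => fermionSign (k y)).prod = 1 :=
        List.prod_eq_one fun σ hσ => by
          obtain ⟨y, hy, rfl⟩ := List.mem_map.mp hσ
          simp [fermionSign, hodd y (List.mem_cons_of_mem x hy)]
      have hR := gradedCommute_carMonomial h k hl.1
      rw [hsign] at hR
      rw [carMonomial_cons, condExp_cons, siteExp_mul_of_gradedCommute hR, siteExp_carFactor h,
        smul_mul_assoc, one_mul, condExp_smul, ih hl.2, List.map_cons, List.prod_cons, smul_smul]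

end Algebra

end CARAlgebra

theorem condExp_trace_property_general
    {Γ A : Type*} [DecidableEq Γ]
    [NormedRing A] [StarRing A] [NormedAlgebra ℂ A]
    (a : Γ → A) (hCAR : IsCAR a)
    (X Λ : Finset Γ)
    (l : List Γ) (hl : l.Nodup) (hlset : l.toFinset = Λ \ X) :
    (∀ B ∈ carSpan a (Λ \ X), ∃ c : ℂ, condExp a l B = c • (1 : A)) ∧
    (∀ (l' : List Γ) (k : Γ → Fin 4), l'.Nodup → l'.toFinset = Λ \ X →
      condExp a l (carMonomial a l' k) =
        ((l'.map fun x => if k x = 0 then (1 : ℂ) else if k x = 3 then 1 / 2 else 0).prod)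
          • (1 : A)) := by
  have monomial (l' : List Γ) (k : Γ → Fin 4) (hl' : l'.Nodup) (hset : l'.toFinset = Λ \ X) :
      condExp a l (carMonomial a l' k) = (l'.map fun y => carCoeff (k y)).prod • 1 := by
    rw [condExp_perm hCAR (List.perm_of_nodup_nodup_toFinset_eq hl hl' (hlset.trans hset.symm))]
    exact condExp_carMonomial hCAR k hl'
  refine ⟨fun B hB => ?_, monomial⟩
  have hspan : carSpan a (Λ \ X) ≤ (ℂ ∙ (1 : A)).comap (condExpLinearMap a l) := by
    refine Submodule.span_le.mpr ?_
    rintro _ ⟨l', k, hl', hset, rfl⟩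
    -- `carSpan` computes `l'.toFinset` with the classical `DecidableEq Γ` instance
    exact Submodule.mem_span_singleton.mpr ⟨_, (monomial l' k hl' (by convert hset)).symm⟩
  obtain ⟨c, hc⟩ := Submodule.mem_span_singleton.mp (hspan hB)
  exact ⟨c, hc.symm⟩

/-- trace property of `𝔼_X^Λ`: on `𝔄_{Λ∖X}` the conditional expectation is a
scalar multiple of the identity; explicitly, on a monomial supported in `Λ∖X` it equals the
product of the single-site coefficients `c(1) = 1`, `c(a* a) = 1/2`, `c(a) = c(a*) = 0`,
times the identity. -/
theorem condExp_trace_property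
    {Γ A : Type*} [DecidableEq Γ]
    [NormedRing A] [StarRing A] [CStarRing A] [NormedAlgebra ℂ A]
    (a : Γ → A) (hCAR : IsCAR a)
    (X Λ : Finset Γ) (hXΛ : X ⊆ Λ)
    (l : List Γ) (hl : l.Nodup) (hlset : l.toFinset = Λ \ X) :
    (∀ B ∈ carSpan a (Λ \ X), ∃ c : ℂ, condExp a l B = c • (1 : A)) ∧
    (∀ (l' : List Γ) (k : Γ → Fin 4), l'.Nodup → l'.toFinset = Λ \ X →
      condExp a l (carMonomial a l' k) =
        ((l'.map fun x => if k x = 0 then (1 : ℂ) else if k x = 3 then 1 / 2 else 0).prod)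
          • (1 : A)) :=
  condExp_trace_property_general a hCAR X Λ l hl hlset
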